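/- For every integer N ≥ 3 and every p ∈ (0,1), the function Z_N(p) := (1-2N) p^{N+1} + (N-1) p^{N+2} + N p^N + p²((N-1)(1-p)^N + 1) + p((1-p)^N - 1) - N (1-p)^N p^N is strictly negative. -/
import Mathlib

noncomputable def Z (N : ℕ) (p : ℝ) : ℝ :=
  (1 - 2 * (N : ℝ)) * p ^ (N + 1) + ((N : ℝ) - 1) * p ^ (N + 2) + (N : ℝ) * p ^ N
    + p ^ 2 * (((N : ℝ) - 1) * (1 - p) ^ N + 1) + p * ((1 - p) ^ N - 1)
    - (N : ℝ) * (1 - p) ^ N * p ^ N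

lemma Z_three (p : ℝ) : Z 3 p = -3 * (1 - p) ^ 3 * p ^ 3 := by
  unfold Z; norm_num; ring

lemma Z_step (N : ℕ) (p : ℝ) :
    Z (N + 1) p = Z N p
      + (-(N : ℝ) * (1 - p) ^ N * (p ^ 3 - p ^ N) - (N : ℝ) * (1 - p) ^ 3 * p ^ N
        - ((N : ℝ) + 1) * (1 - p) ^ (N + 1) * p ^ (N + 1)) := by
  unfold Z
  push_cast
  simp only [pow_succ]
  ring

theorem Z_neg (N : ℕ) (hN : 3 ≤ N) (p : ℝ) (hp : 0 < p) (hp1 : p < 1) :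
    Z N p < 0 := by
  induction N, hN using Nat.le_induction with
  | base =>
    rw [Z_three]
    have hq : (0:ℝ) < 1 - p := by linarith
    have : 0 < 3 * (1 - p) ^ 3 * p ^ 3 := by positivity
    linarith
  | succ N hN ih =>
    have hq : (0:ℝ) < 1 - p := by linarith
    have hpow : p ^ N ≤ p ^ 3 := pow_le_pow_of_le_one hp.le hp1.le hN
    have h1 : 0 ≤ (N : ℝ) * (1 - p) ^ N * (p ^ 3 - p ^ N) := by
      apply mul_nonneg (mul_nonneg (by positivity) (pow_nonneg hq.le N))
      linarith
    have h2 : 0 ≤ (N : ℝ) * (1 - p) ^ 3 * p ^ N :=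
      mul_nonneg (mul_nonneg (by positivity) (by positivity)) (pow_nonneg hp.le N)
    have h3 : 0 < ((N : ℝ) + 1) * (1 - p) ^ (N + 1) * p ^ (N + 1) :=
      mul_pos (mul_pos (by positivity) (pow_pos hq (N + 1))) (pow_pos hp (N + 1))
    rw [Z_step]
    linarith
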